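/- Every integer matrix A can be transformed by left-multiplication by a unimodular integer matrix U into a matrix H in row-style Hermite Normal Form: H is upper-triangular in the staircase sense (pivots strictly move right down the rows), each pivot is positive, entries above a pivot are nonnegative and strictly less than the pivot, and entries below a pivot are zero. -/

import Mathlib

/-- `j` is the pivot column of row `i` of `H`: the first nonzero entry. -/
def IsPivot {m n : ℕ} (H : Matrix (Fin m) (Fin n) ℤ) (i : Fin m) (j : Fin n) : Prop :=
  H i j ≠ 0 ∧ ∀ j' : Fin n, j' < j → H i j' = 0

/-- `H` is in row-style Hermite Normal Form. -/
def IsHermiteNF {m n : ℕ} (H : Matrix (Fin m) (Fin n) ℤ) : Prop :=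
  (∀ (i : Fin m) (j : Fin n), IsPivot H i j →
      0 < H i j ∧
      (∀ i' : Fin m, i' < i → 0 ≤ H i' j ∧ H i' j < H i j) ∧
      (∀ i' : Fin m, i < i' → H i' j = 0) ∧
      (∀ (i₂ : Fin m) (j₂ : Fin n), i < i₂ → IsPivot H i₂ j₂ → j < j₂)) ∧
  (∀ i i' : Fin m, i < i' → (∀ j, H i j = 0) → ∀ j, H i' j = 0)

/-!
Induction on the number of rows. Euclid's algorithm, performed with transvections on pairs of
rows, clears the first nonzero column of `A` below the top row and leaves a positive entry on
top; by induction the remaining rows can be put into Hermite normal form, and finally the top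
row is reduced modulo the pivots below it, one pivot row at a time from the top.
-/

open Matrix

section

variable {ι κ R : Type*} [Fintype ι] [DecidableEq ι] [CommRing R]

def RowEquiv (A B : Matrix ι κ R) : Prop :=
  ∃ U : Matrix ι ι R, IsUnit U.det ∧ U * A = B

namespace RowEquiv

variable {A B C : Matrix ι κ R}

theorem refl (A : Matrix ι κ R) : RowEquiv A A := ⟨1, by simp, Matrix.one_mul A⟩

theorem trans (h₁ : RowEquiv A B) (h₂ : RowEquiv B C) : RowEquiv A C := by
  obtain ⟨U, hU, rfl⟩ := h₁
  obtain ⟨V, hV, rfl⟩ := h₂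
  exact ⟨V * U, by rw [det_mul]; exact hV.mul hU, Matrix.mul_assoc ..⟩

theorem symm (h : RowEquiv A B) : RowEquiv B A := by
  obtain ⟨U, hU, rfl⟩ := h
  refine ⟨U⁻¹, isUnit_nonsing_inv_det U hU, ?_⟩
  rw [← Matrix.mul_assoc, nonsing_inv_mul U hU, Matrix.one_mul]

theorem apply_eq_zero_of_col_eq_zero (h : RowEquiv A B) {j : κ} (hA : ∀ i, A i j = 0) (i : ι) :
    B i j = 0 := by
  obtain ⟨U, -, rfl⟩ := h
  simp [mul_apply, hA]

theorem exists_submatrix_succ {m : ℕ} {A : Matrix (Fin (m + 1)) κ R} {C : Matrix (Fin m) κ R}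
    (h : RowEquiv (A.submatrix Fin.succ id) C) :
    ∃ B, RowEquiv A B ∧ B 0 = A 0 ∧ B.submatrix Fin.succ id = C := by
  obtain ⟨U, hU, rfl⟩ := h
  -- the block diagonal matrix `diag(1, U)`
  let V : Matrix (Fin (m + 1)) (Fin (m + 1)) R :=
    of fun i j => Fin.cases ((Pi.single 0 1 : Fin (m + 1) → R) j) (fun i => Fin.cases 0 (U i) j) i
  refine ⟨V * A, ⟨V, ?_, rfl⟩, ?_, ?_⟩
  · rw [det_succ_row_zero, Fin.sum_univ_succ]
    simp [V, submatrix]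
    exact hU
  · ext j
    simp [V, mul_apply, Fin.sum_univ_succ]
  · ext i j
    simp [V, mul_apply, Fin.sum_univ_succ]

end RowEquiv

theorem rowEquiv_updateRow_add_smul (A : Matrix ι κ R) {i j : ι} (hij : i ≠ j) (c : R) :
    RowEquiv A (A.updateRow i (A i + c • A j)) := by
  refine ⟨transvection i j c, by simp [hij], ?_⟩
  ext a b
  rcases eq_or_ne a i with rfl | ha <;> simp [*]

theorem rowEquiv_updateRow_neg (A : Matrix ι κ R) (i : ι) :
    RowEquiv A (A.updateRow i (-A i)) := by
  refine ⟨diagonal (Function.update 1 i (-1)), ?_, ?_⟩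
  · simp [Finset.prod_update_of_mem]
  · ext a b
    rcases eq_or_ne a i with rfl | ha <;> simp [*]

theorem rowEquiv_updateRow_swap_neg (A : Matrix ι κ R) {i j : ι} (hij : i ≠ j) :
    RowEquiv A ((A.updateRow i (A j)).updateRow j (-A i)) := by
  convert ((rowEquiv_updateRow_add_smul A hij 1).trans
    (rowEquiv_updateRow_add_smul _ hij.symm (-1))).trans
    (rowEquiv_updateRow_add_smul _ hij 1) using 1
  ext a b
  rcases eq_or_ne a i with rfl | hai
  · simp [hij, hij.symm]
  · rcases eq_or_ne a j with rfl | haj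
    · simp [hai]
    · simp [hai, haj]

end

section

variable {ι κ : Type*} [Fintype ι] [DecidableEq ι]

theorem exists_rowEquiv_apply_eq_zero (A : Matrix ι κ ℤ) {p q : ι} (hpq : p ≠ q) (j : κ) :
    ∃ B, RowEquiv A B ∧ B q j = 0 ∧ ∀ i, i ≠ p → i ≠ q → B i = A i := by
  induction hk : (A q j).natAbs using Nat.strong_induction_on generalizing A with
  | _ k ih =>
  by_cases hq : A q j = 0
  · exact ⟨A, .refl A, hq, fun _ _ _ => rfl⟩
  -- A step of Euclid's algorithm in column `j`: reduce row `p` modulo row `q`, then swap them.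
  set A₁ := A.updateRow p (A p + (-(A p j / A q j)) • A q)
  have hA₁ : A₁ p j = A p j % A q j := by simp [A₁, Int.emod_def]; ring
  obtain ⟨B, hA₂B, hBq, hB⟩ := ih (A p j % A q j).natAbs
    (by
      have hlt := Int.emod_lt_abs (A p j) hq
      rw [Int.abs_eq_natAbs] at hlt
      have := Int.emod_nonneg (A p j) hq
      omega)
    ((A₁.updateRow p (A₁ q)).updateRow q (-A₁ p)) (by simp [hA₁])
  refine ⟨B, ((rowEquiv_updateRow_add_smul A hpq _).trans
    (rowEquiv_updateRow_swap_neg A₁ hpq)).trans hA₂B, hBq, fun i hip hiq => ?_⟩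
  simp [hB i hip hiq, A₁, hip, hiq]

theorem exists_rowEquiv_col_eq_zero_of_ne (A : Matrix ι κ ℤ) (p : ι) (j : κ) :
    ∃ B, RowEquiv A B ∧ ∀ i, i ≠ p → B i j = 0 := by
  suffices ∀ s : Finset ι, ∃ B, RowEquiv A B ∧ ∀ i ∈ s, i ≠ p → B i j = 0 by
    simpa using this Finset.univ
  intro s
  induction s using Finset.induction_on with
  | empty => exact ⟨A, .refl A, by simp⟩
  | insert q s _ ih =>
    obtain ⟨B, hAB, hB⟩ := ih
    by_cases hqp : q = p
    · exact ⟨B, hAB, by simpa [hqp] using hB⟩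
    obtain ⟨C, hBC, hCq, hC⟩ := exists_rowEquiv_apply_eq_zero B (Ne.symm hqp) j
    refine ⟨C, hAB.trans hBC, fun i hi hip => ?_⟩
    by_cases hiq : i = q
    · exact hiq ▸ hCq
    · rw [hC i hip hiq]
      exact hB i ((Finset.mem_insert.mp hi).resolve_left hiq) hip

theorem exists_rowEquiv_col_eq_single_pos (A : Matrix ι κ ℤ) (p : ι) {j : κ}
    (hj : ∃ i, A i j ≠ 0) :
    ∃ B, RowEquiv A B ∧ 0 < B p j ∧ ∀ i, i ≠ p → B i j = 0 := by
  obtain ⟨B, hAB, hB⟩ := exists_rowEquiv_col_eq_zero_of_ne A p j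
  have hBp : B p j ≠ 0 := fun h => by
    obtain ⟨i, hi⟩ := hj
    refine hi (hAB.symm.apply_eq_zero_of_col_eq_zero (fun i' => ?_) i)
    by_cases hi' : i' = p
    · exact hi' ▸ h
    · exact hB i' hi'
  rcases hBp.lt_or_gt with hneg | hpos
  · refine ⟨B.updateRow p (-B p), hAB.trans (rowEquiv_updateRow_neg B p), by simpa using hneg,
      fun i hip => ?_⟩
    simp [hip, hB i hip]
  · exact ⟨B, hAB, hpos, hB⟩

end

section

variable {m n : ℕ}

theorem IsPivot.unique {H : Matrix (Fin m) (Fin n) ℤ} {i : Fin m} {j j' : Fin n}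
    (h : IsPivot H i j) (h' : IsPivot H i j') : j = j' := by
  by_contra hne
  rcases lt_or_gt_of_ne hne with hlt | hlt
  · exact h.1 (h'.2 j hlt)
  · exact h'.1 (h.2 j' hlt)

theorem exists_rowEquiv_updateRow_zero_reduced (A : Matrix (Fin (m + 1)) (Fin n) ℤ)
    (hA : IsHermiteNF (A.submatrix Fin.succ id)) {k : ℕ} (hk : k ≤ m) :
    ∃ r, RowEquiv A (A.updateRow 0 r) ∧
      (∀ j, (∀ i : Fin m, A i.succ j = 0) → r j = A 0 j) ∧
      ∀ (i : Fin m) j, (i : ℕ) < k → IsPivot (A.submatrix Fin.succ id) i j →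
        0 ≤ r j ∧ r j < A i.succ j := by
  induction k with
  | zero =>
    refine ⟨A 0, by rw [updateRow_eq_self]; exact .refl A, fun _ _ => rfl, fun _ _ h => ?_⟩
    exact absurd h (Nat.not_lt_zero _)
  | succ k ih =>
    obtain ⟨r, hr, hrzero, hrred⟩ := ih (by omega)
    set i₀ : Fin m := ⟨k, by omega⟩
    by_cases hpiv : ∃ j, IsPivot (A.submatrix Fin.succ id) i₀ j
    swap
    · refine ⟨r, hr, hrzero, fun i j hi hij => ?_⟩
      rcases Nat.lt_succ_iff_lt_or_eq.mp hi with hi | hi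
      · exact hrred i j hi hij
      · exact absurd ⟨j, (Fin.ext hi : i = i₀) ▸ hij⟩ hpiv
    obtain ⟨j₀, hj₀⟩ := hpiv
    have hp : 0 < A i₀.succ j₀ := (hA.1 i₀ j₀ hj₀).1
    have hstep := rowEquiv_updateRow_add_smul (A.updateRow 0 r) (Fin.succ_ne_zero i₀).symm
      (-(r j₀ / A i₀.succ j₀))
    simp only [updateRow_self, updateRow_ne (Fin.succ_ne_zero i₀), updateRow_idem] at hstep
    refine ⟨_, hr.trans hstep, fun j hj => by simp [hj, hrzero j hj], fun i j hi hij => ?_⟩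
    rcases Nat.lt_succ_iff_lt_or_eq.mp hi with hi | hi
    · -- Row `i₀` vanishes below the pivot of the earlier row `i`, so that reduction survives.
      have hzero : A i₀.succ j = 0 := (hA.1 i j hij).2.2.1 i₀ hi
      simpa [hzero] using hrred i j hi hij
    · obtain rfl : i = i₀ := Fin.ext hi
      obtain rfl : j = j₀ := hij.unique hj₀
      have hmod : (r + -(r j / A i₀.succ j) • A i₀.succ) j = r j % A i₀.succ j := by
        simp [Int.emod_def]; ring
      rw [hmod]
      exact ⟨Int.emod_nonneg _ hp.ne', Int.emod_lt_of_pos _ hp⟩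

theorem IsHermiteNF.of_submatrix_succ {H : Matrix (Fin (m + 1)) (Fin n) ℤ} {j₀ : Fin n}
    (htail : IsHermiteNF (H.submatrix Fin.succ id)) (hlead : ∀ j < j₀, H 0 j = 0)
    (hpos : 0 < H 0 j₀) (hzero : ∀ (i : Fin m) j, j ≤ j₀ → H i.succ j = 0)
    (hred : ∀ i j, IsPivot (H.submatrix Fin.succ id) i j → 0 ≤ H 0 j ∧ H 0 j < H i.succ j) :
    IsHermiteNF H := by
  have hpiv : IsPivot H 0 j₀ := ⟨hpos.ne', hlead⟩
  refine ⟨fun i j hij => ?_, fun i i' hii' hi j => ?_⟩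
  · cases i using Fin.cases with
    | zero =>
      obtain rfl := hij.unique hpiv
      refine ⟨hpos, fun i' h => absurd h (Fin.not_lt_zero i'), fun i' h => ?_,
        fun i₂ j₂ h₂ hij₂ => ?_⟩
      · cases i' using Fin.cases with
        | zero => exact absurd h (lt_irrefl 0)
        | succ i' => exact hzero i' j le_rfl
      · cases i₂ using Fin.cases with
        | zero => exact absurd h₂ (lt_irrefl 0)
        | succ i₂ => exact lt_of_not_ge fun h => hij₂.1 (hzero i₂ j₂ h)
    | succ i =>
      obtain ⟨hpos', habove, hbelow, hstair⟩ := htail.1 i j hij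
      refine ⟨hpos', fun i' h => ?_, fun i' h => ?_, fun i₂ j₂ h₂ hij₂ => ?_⟩
      · cases i' using Fin.cases with
        | zero => exact hred i j hij
        | succ i' => exact habove i' (Fin.succ_lt_succ_iff.mp h)
      · cases i' using Fin.cases with
        | zero => exact absurd h (Fin.not_lt_zero _)
        | succ i' => exact hbelow i' (Fin.succ_lt_succ_iff.mp h)
      · cases i₂ using Fin.cases with
        | zero => exact absurd h₂ (Fin.not_lt_zero _)
        | succ i₂ => exact hstair i₂ j₂ (Fin.succ_lt_succ_iff.mp h₂) hij₂
  · cases i using Fin.cases with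
    | zero => exact absurd (hi j₀) hpos.ne'
    | succ i =>
      cases i' using Fin.cases with
      | zero => exact absurd hii' (Fin.not_lt_zero _)
      | succ i' => exact htail.2 i i' (Fin.succ_lt_succ_iff.mp hii') hi j

theorem exists_first_nonzero_col {ι κ α : Type*} [LinearOrder κ] [WellFoundedLT κ] [Zero α]
    {A : Matrix ι κ α} (hA : ∃ i j, A i j ≠ 0) :
    ∃ j₀, (∃ i, A i j₀ ≠ 0) ∧ ∀ j < j₀, ∀ i, A i j = 0 := by
  obtain ⟨i, j, h⟩ := hA
  obtain ⟨j₀, hj₀, hmin⟩ :=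
    WellFounded.has_min wellFounded_lt {j | ∃ i, A i j ≠ 0} ⟨j, i, h⟩
  exact ⟨j₀, hj₀, fun j hj i => by_contra fun h => hmin j ⟨i, h⟩ hj⟩

theorem exists_rowEquiv_isHermiteNF_of_submatrix_succ {B : Matrix (Fin (m + 1)) (Fin n) ℤ}
    {j₀ : Fin n} (hlead : ∀ j < j₀, B 0 j = 0) (hpos : 0 < B 0 j₀)
    (hzero : ∀ (i : Fin m) j, j ≤ j₀ → B i.succ j = 0) {T : Matrix (Fin m) (Fin n) ℤ}
    (hBT : RowEquiv (B.submatrix Fin.succ id) T) (hT : IsHermiteNF T) :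
    ∃ H, RowEquiv B H ∧ IsHermiteNF H := by
  obtain ⟨C, hBC, hC₀, hCT⟩ := hBT.exists_submatrix_succ
  have hCzero : ∀ (i : Fin m) j, j ≤ j₀ → C i.succ j = 0 := fun i j hj => by
    simpa [← hCT] using hBT.apply_eq_zero_of_col_eq_zero (fun i => hzero i j hj) i
  obtain ⟨r, hCr, hrzero, hrred⟩ := exists_rowEquiv_updateRow_zero_reduced C (hCT ▸ hT) le_rfl
  have hrB : ∀ j ≤ j₀, r j = B 0 j := fun j hj => by
    rw [hrzero j fun i => hCzero i j hj, hC₀]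
  have htail : (C.updateRow 0 r).submatrix Fin.succ id = C.submatrix Fin.succ id := by
    ext i j
    simp [updateRow_ne, Fin.succ_ne_zero]
  refine ⟨C.updateRow 0 r, hBC.trans hCr,
    IsHermiteNF.of_submatrix_succ (j₀ := j₀) (htail ▸ hCT ▸ hT) (fun j hj => ?_) ?_
      (fun i j hj => ?_) (fun i j hij => ?_)⟩
  · simpa [hrB j hj.le] using hlead j hj
  · simpa [hrB j₀ le_rfl] using hpos
  · simpa [updateRow_ne, Fin.succ_ne_zero] using hCzero i j hj
  · simpa [updateRow_ne, Fin.succ_ne_zero] using hrred i j i.2 (htail ▸ hij)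

theorem exists_rowEquiv_isHermiteNF (A : Matrix (Fin m) (Fin n) ℤ) :
    ∃ H, RowEquiv A H ∧ IsHermiteNF H := by
  induction m with
  | zero => exact ⟨A, .refl A, fun i => i.elim0, fun i => i.elim0⟩
  | succ m ih =>
  by_cases hA : ∀ i j, A i j = 0
  · exact ⟨A, .refl A, fun i j h => absurd (hA i j) h.1, fun _ i' _ _ j => hA i' j⟩
  obtain ⟨j₀, hj₀, hlt⟩ := exists_first_nonzero_col (by simpa using hA)
  obtain ⟨B, hAB, hBpos, hBcol⟩ := exists_rowEquiv_col_eq_single_pos A 0 hj₀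
  have hBlt : ∀ j < j₀, ∀ i, B i j = 0 := fun j hj =>
    hAB.apply_eq_zero_of_col_eq_zero (hlt j hj)
  have hBzero : ∀ (i : Fin m) j, j ≤ j₀ → B i.succ j = 0 := fun i j hj =>
    hj.lt_or_eq.elim (fun hj => hBlt j hj i.succ) (fun hj => hj ▸ hBcol _ (Fin.succ_ne_zero i))
  obtain ⟨T, hBT, hT⟩ := ih (B.submatrix Fin.succ id)
  obtain ⟨H, hBH, hH⟩ := exists_rowEquiv_isHermiteNF_of_submatrix_succ
    (fun j hj => hBlt j hj 0) hBpos hBzero hBT hT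
  exact ⟨H, hAB.trans hBH, hH⟩

end

/-- Every integer matrix can be brought into Hermite Normal Form by
left-multiplication by a unimodular matrix. -/
theorem stmt13 (m n : ℕ) (A : Matrix (Fin m) (Fin n) ℤ) :
    ∃ U : Matrix (Fin m) (Fin m) ℤ, IsUnit U.det ∧ IsHermiteNF (U * A) := by
  obtain ⟨H, ⟨U, hU, rfl⟩, hH⟩ := exists_rowEquiv_isHermiteNF A
  exact ⟨U, hU, hH⟩
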